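/- arXiv:2309.01893 — 3 statements merged into one kernel-verified Lean document; each statement's English description precedes it below -/
import Mathlib

section
/- Suppose lambda sin(delta) > lambda_c for some 0 < delta < pi, where lambda_c = max_{n,m} |omega_n - omega_m|. Let t* > 0 and suppose a C^1 solution of the real-part Kuramoto equations w_n' = omega_n + (lambda/N) sum_l sin(w_l - w_n) cosh(v_{ln}) (with cosh(v_{ln}) >= 1 arbitrary nonnegative-argument functions) satisfies w_n(t*) - w_m(t*) = pi - delta for some pair (n,m) and |w_s(t) - w_l(t)| <= pi - delta for all pairs at t = t*. Then w_n'(t*) - w_m'(t*) <= lambda_c - lambda sin(delta) < 0. -/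
open Real

/-- If `λ sin δ > λ_c` with `λ_c = max_{n,m} |ω_n - ω_m|`, and at time `t⋆` a C¹
solution of the real-part Kuramoto equations (with arbitrary factors `C l n t ≥ 1`
playing the role of `cosh (v_{ln})`) satisfies `w_n(t⋆) - w_m(t⋆) = π - δ` while all
pairwise differences are bounded by `π - δ`, then
`w_n'(t⋆) - w_m'(t⋆) ≤ λ_c - λ sin δ < 0`. -/
theorem real_part_derivative_negative
    (N : ℕ) (hN : 2 ≤ N) (ω : Fin N → ℝ) (lam lamc δ : ℝ)
    (hδ0 : 0 < δ) (hδπ : δ < Real.pi)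
    (hlamc : IsGreatest {d : ℝ | ∃ n m : Fin N, d = |ω n - ω m|} lamc)
    (hstrong : lam * Real.sin δ > lamc)
    (C : Fin N → Fin N → ℝ → ℝ)
    (hC1 : ∀ l n t, 1 ≤ C l n t)
    (hCsymm : ∀ l n t, C l n t = C n l t)
    (hCdiag : ∀ n t, C n n t = 1)
    (w : Fin N → ℝ → ℝ)
    (hw : ∀ n t, HasDerivAt (w n)
      (ω n + (lam / N) * ∑ l, Real.sin (w l t - w n t) * C l n t) t)
    (tstar : ℝ) (htstar : 0 < tstar) (n m : Fin N)
    (hnm : w n tstar - w m tstar = Real.pi - δ)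
    (hall : ∀ s l : Fin N, |w s tstar - w l tstar| ≤ Real.pi - δ) :
    deriv (w n) tstar - deriv (w m) tstar ≤ lamc - lam * Real.sin δ ∧
      lamc - lam * Real.sin δ < 0 := by

  have hsinδ : 0 < Real.sin δ := Real.sin_pos_of_pos_of_lt_pi hδ0 hδπ
  have hlamc0 : 0 ≤ lamc := by
    obtain ⟨⟨a, b, hab⟩, -⟩ := hlamc
    rw [hab]; positivity
  have hlam0 : 0 < lam := by nlinarith
  have hN0 : (0 : ℝ) < N := by positivity
  have key : ∀ l : Fin N,
      Real.sin (w l tstar - w n tstar) * C l n tstar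
        - Real.sin (w l tstar - w m tstar) * C l m tstar ≤ -Real.sin δ := by
    intro l
    set a := w l tstar - w m tstar with ha
    have ha0 : 0 ≤ a := by
      have := (abs_le.mp (hall n l)).2
      have : w n tstar - w l tstar ≤ Real.pi - δ := this
      have : a = (w l tstar - w n tstar) + (Real.pi - δ) := by rw [ha]; linarith [hnm]
      linarith
    have ha1 : a ≤ Real.pi - δ := (abs_le.mp (hall l m)).2
    have hb : w l tstar - w n tstar = -(Real.pi - δ - a) := by rw [ha]; linarith [hnm]
    set b := Real.pi - δ - a with hbdef
    have hb0 : 0 ≤ b := by simp [hbdef]; linarith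
    have hsa : 0 ≤ Real.sin a :=
      Real.sin_nonneg_of_nonneg_of_le_pi ha0 (by linarith)
    have hsb : 0 ≤ Real.sin b :=
      Real.sin_nonneg_of_nonneg_of_le_pi hb0 (by simp [hbdef]; linarith)
    have hsum : Real.sin δ ≤ Real.sin a + Real.sin b := by
      have hab : Real.sin (a + b) = Real.sin a * Real.cos b + Real.cos a * Real.sin b :=
        Real.sin_add a b
      have h1 : Real.cos a ≤ 1 := Real.cos_le_one a
      have h2 : Real.cos b ≤ 1 := Real.cos_le_one b
      have h3 : a + b = Real.pi - δ := by rw [hbdef]; ring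
      have h4 : Real.sin (Real.pi - δ) = Real.sin δ := Real.sin_pi_sub δ
      have e1 : Real.sin a * Real.cos b ≤ Real.sin a := mul_le_of_le_one_right hsa h2
      have e2 : Real.cos a * Real.sin b ≤ Real.sin b := mul_le_of_le_one_left hsb h1
      rw [h3, h4] at hab
      linarith
    have hsin1 : Real.sin (w l tstar - w n tstar) = -Real.sin b := by
      rw [hb, Real.sin_neg]
    have hterm1 : Real.sin (w l tstar - w n tstar) * C l n tstar ≤ -Real.sin b := by
      rw [hsin1]
      nlinarith [hC1 l n tstar]
    have hterm2 : -(Real.sin a * C l m tstar) ≤ -Real.sin a := by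
      nlinarith [hC1 l m tstar]
    linarith
  have hsum : (∑ l, Real.sin (w l tstar - w n tstar) * C l n tstar)
      - (∑ l, Real.sin (w l tstar - w m tstar) * C l m tstar)
      ≤ (N : ℝ) * (-Real.sin δ) := by
    rw [← Finset.sum_sub_distrib]
    calc (∑ l : Fin N, (Real.sin (w l tstar - w n tstar) * C l n tstar
            - Real.sin (w l tstar - w m tstar) * C l m tstar))
        ≤ ∑ _l : Fin N, (-Real.sin δ) := Finset.sum_le_sum (fun l _ => key l)
      _ = (N : ℝ) * (-Real.sin δ) := by
          simp [Finset.sum_const, Finset.card_univ, mul_comm]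
  have hdn := (hw n tstar).deriv
  have hdm := (hw m tstar).deriv
  have hωbound : ω n - ω m ≤ lamc := by
    have := hlamc.2 ⟨n, m, rfl⟩
    exact le_trans (le_abs_self _) this
  constructor
  · rw [hdn, hdm]
    have hfrac : 0 < lam / N := by positivity
    have hmul : (lam / N) * ((∑ l, Real.sin (w l tstar - w n tstar) * C l n tstar)
        - (∑ l, Real.sin (w l tstar - w m tstar) * C l m tstar))
        ≤ (lam / N) * ((N : ℝ) * (-Real.sin δ)) :=
      mul_le_mul_of_nonneg_left hsum (le_of_lt hfrac)
    have heq : (lam / N) * ((N : ℝ) * (-Real.sin δ)) = -(lam * Real.sin δ) := by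
      field_simp
    nlinarith
  · linarith
end

section
/- Let 0 < lambda < omega, gamma = omega/lambda, alpha = arcosh(gamma). Define F(w, v) = (w - pi/2)(gamma - sin(w) cosh(v)) - (v - alpha) cos(w) sinh(v). Then there exists epsilon > 0 such that F(w, v) < 0 for all 0 < w < pi/2 and (1 - epsilon) alpha < v < (1 + epsilon) alpha, and F(w, v) > 0 for all pi/2 < w < pi and (1 - epsilon) alpha < v < (1 + epsilon) alpha. -/
/-!
Put `δ = π/2 - w`. The tangent line of `cosh` at `v` lies below `cosh`, so
`cosh α ≥ cosh v + (α - v) sinh v`, which turns `-F(w, v)` into at least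
`δ (1 - cos δ) cosh v - (v - α)(δ - sin δ) sinh v`. Since `tan δ ≥ δ` gives
`δ - sin δ ≤ δ (1 - cos δ)` and `sinh v < cosh v`, this is positive whenever `0 ≤ v ≤ α + 1`,
a band containing `((1 - ε) α, (1 + ε) α)` for `ε = 1/(α + 1)`. The half `π/2 < w < π`
follows from the antisymmetry `F(π - w, v) = -F(w, v)`.
-/

open Real

namespace Real

theorem cosh_add_mul_sinh_le_cosh (x y : ℝ) : cosh x + (y - x) * sinh x ≤ cosh y := by
  have hexp : exp x * ((y - x) + 1) ≤ exp y := by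
    calc exp x * ((y - x) + 1) ≤ exp x * exp (y - x) := by gcongr; exact add_one_le_exp _
      _ = exp y := by rw [← exp_add]; ring_nf
  have hexp_neg : exp (-x) * ((x - y) + 1) ≤ exp (-y) := by
    calc exp (-x) * ((x - y) + 1) ≤ exp (-x) * exp (x - y) := by gcongr; exact add_one_le_exp _
      _ = exp (-y) := by rw [← exp_add]; ring_nf
  rw [cosh_eq, cosh_eq, sinh_eq]
  linarith

theorem mul_cos_le_sin {x : ℝ} (h0 : 0 ≤ x) (h1 : x < π / 2) : x * cos x ≤ sin x := by
  have hcos : 0 < cos x := cos_pos_of_mem_Ioo ⟨by linarith [pi_pos], h1⟩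
  simpa [tan_eq_sin_div_cos, le_div_iff₀ hcos] using le_tan h0 h1

end Real

/-- The function `F(w, v)` of the statement, with `γ` written as `cosh α`. -/
noncomputable def lyapunovRate (α w v : ℝ) : ℝ :=
  (w - π / 2) * (cosh α - sin w * cosh v) - (v - α) * cos w * sinh v

theorem lyapunovRate_pi_sub (α w v : ℝ) : lyapunovRate α (π - w) v = -lyapunovRate α w v := by
  simp only [lyapunovRate, sin_pi_sub, cos_pi_sub]
  ring

theorem lyapunovRate_neg {α w v : ℝ} (hv : 0 ≤ v) (hvα : v ≤ α + 1) (hw0 : 0 < w)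
    (hw : w < π / 2) : lyapunovRate α w v < 0 := by
  obtain ⟨δ, rfl⟩ : ∃ δ, w = π / 2 - δ := ⟨π / 2 - w, by ring⟩
  have hδ0 : 0 < δ := by linarith
  have hδ : δ < π / 2 := by linarith
  simp only [lyapunovRate, sin_pi_div_two_sub, cos_pi_div_two_sub]
  have htangent := cosh_add_mul_sinh_le_cosh v α
  have htan := mul_cos_le_sin hδ0.le hδ
  have hsin := sin_lt hδ0
  have hcos : 0 < 1 - cos δ := by nlinarith
  have hsinh : 0 ≤ sinh v := sinh_nonneg_iff.mpr hv
  have hcosh_sub_sinh : 0 < cosh v - sinh v := by rw [cosh_sub_sinh]; exact exp_pos _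
  suffices 0 < δ * (cosh α - cos δ * cosh v) + (v - α) * sin δ * sinh v by linarith
  calc 0 < δ * (1 - cos δ) * (cosh v - sinh v) := by positivity
    _ ≤ δ * (1 - cos δ) * cosh v - (δ - sin δ) * sinh v := by nlinarith
    _ ≤ δ * (1 - cos δ) * cosh v - (v - α) * (δ - sin δ) * sinh v := by
      nlinarith [mul_nonneg (sub_nonneg.mpr hsin.le) hsinh]
    _ ≤ δ * (cosh α - cos δ * cosh v) + (v - α) * sin δ * sinh v := by nlinarith

theorem lyapunovRate_pos {α w v : ℝ} (hv : 0 ≤ v) (hvα : v ≤ α + 1) (hw0 : π / 2 < w)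
    (hw : w < π) : 0 < lyapunovRate α w v := by
  have := lyapunovRate_neg (w := π - w) hv hvα (by linarith) (by linarith)
  rw [lyapunovRate_pi_sub] at this
  linarith

/-- Deceleration/acceleration regions: for `0 < λ < ω`, `γ = ω/λ`,
`α = arcosh γ`, and `F(w,v) = (w - π/2)(γ - sin w cosh v) - (v - α) cos w sinh v`,
there is `ε > 0` such that `F < 0` on `{0 < w < π/2, (1-ε)α < v < (1+ε)α}` and
`F > 0` on `{π/2 < w < π, (1-ε)α < v < (1+ε)α}`. -/
theorem deceleration_acceleration_region (ω lam γ α : ℝ)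
    (hlam : 0 < lam) (hweak : lam < ω)
    (hγ : γ = ω / lam)
    (hα : α = Real.log (γ + Real.sqrt (γ ^ 2 - 1)))
    (F : ℝ → ℝ → ℝ)
    (hF : ∀ w v, F w v =
      (w - Real.pi / 2) * (γ - Real.sin w * Real.cosh v) -
        (v - α) * Real.cos w * Real.sinh v) :
    ∃ ε > 0,
      (∀ w v, 0 < w → w < Real.pi / 2 →
        (1 - ε) * α < v → v < (1 + ε) * α → F w v < 0) ∧
      (∀ w v, Real.pi / 2 < w → w < Real.pi →
        (1 - ε) * α < v → v < (1 + ε) * α → 0 < F w v) := by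
  have hγ1 : 1 ≤ γ := by rw [hγ, le_div_iff₀ hlam]; linarith
  have hα_arcosh : α = arcosh γ := hα
  have hα0 : 0 ≤ α := hα_arcosh ▸ arcosh_nonneg hγ1
  have hF_eq : ∀ w v, F w v = lyapunovRate α w v := by
    intro w v
    rw [hF, lyapunovRate, hα_arcosh, cosh_arcosh hγ1]
  set ε := (α + 1)⁻¹
  have hε : ε * (α + 1) = 1 := inv_mul_cancel₀ (by positivity)
  have hband : ∀ v, (1 - ε) * α < v → v < (1 + ε) * α → 0 ≤ v ∧ v ≤ α + 1 := by
    intro v h₁ h₂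
    constructor <;> nlinarith [inv_nonneg.mpr (by positivity : (0 : ℝ) ≤ α + 1)]
  refine ⟨ε, by positivity, fun w v hw0 hw h₁ h₂ => ?_, fun w v hw0 hw h₁ h₂ => ?_⟩
  · obtain ⟨hv, hvα⟩ := hband v h₁ h₂
    exact hF_eq w v ▸ lyapunovRate_neg hv hvα hw0 hw
  · obtain ⟨hv, hvα⟩ := hband v h₁ h₂
    exact hF_eq w v ▸ lyapunovRate_pos hv hvα hw0 hw
end

section
/- Suppose cos(2w) is nonzero, v > 0, and cos(w) sinh(v) + cos(2w) sinh(2v) = 0. Then cosh(v) = -cos(w)/(2 cos(2w)), and substituting into (3 omega)/(2 lambda) = sin(w) cosh(v) + sin(2w) cosh(2v) yields 4 s^3 + (6 omega/lambda) s^2 - 3 s - 6 omega/lambda = 0, where s = sin(2w). -/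
/-!
Since `sinh 2v = 2 sinh v cosh v` and `sinh v ≠ 0`, the second equation factors to
`cos w + 2 cos 2w cosh v = 0`. Feeding `cosh v = -cos w / (2 cos 2w)` into
`cosh 2v = 2 cosh² v - 1` and using `sin 2w = 2 sin w cos w`, `2 cos² w = 1 + cos 2w`, the
right-hand side of the first equation collapses to `s (1 - 4c²) / (4c²)` with `s = sin 2w`,
`c = cos 2w`; eliminating `c² = 1 - s²` leaves a cubic in `s`.
-/

open Real

theorem mul_sinh_add_mul_sinh_two_mul (a b v : ℝ) :
    a * sinh v + b * sinh (2 * v) = sinh v * (a + 2 * b * cosh v) := by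
  rw [sinh_two_mul]
  ring

theorem cosh_eq_of_mul_sinh_add_mul_sinh_two_mul_eq_zero {a b v : ℝ} (hb : b ≠ 0) (hv : v ≠ 0)
    (h : a * sinh v + b * sinh (2 * v) = 0) : cosh v = -a / (2 * b) := by
  rw [mul_sinh_add_mul_sinh_two_mul] at h
  have hlin : a + 2 * b * cosh v = 0 := (mul_eq_zero.1 h).resolve_left (sinh_ne_zero.2 hv)
  field_simp
  linarith

theorem sin_mul_cosh_add_sin_two_mul_mul_cosh_two_mul_of_cosh_eq {w v : ℝ}
    (hc : cos (2 * w) ≠ 0) (hcosh : cosh v = -cos w / (2 * cos (2 * w))) :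
    sin w * cosh v + sin (2 * w) * cosh (2 * v) =
      sin (2 * w) * (1 - 4 * cos (2 * w) ^ 2) / (4 * cos (2 * w) ^ 2) := by
  have hcosh_two_mul : cosh (2 * v) = 2 * cosh v ^ 2 - 1 := by
    rw [cosh_two_mul, cosh_sq']
    ring
  rw [hcosh_two_mul, hcosh]
  field_simp
  linear_combination 2 * cos (2 * w) * sin_two_mul w + 4 * sin (2 * w) * cos_sq w

theorem cubic_of_eq_div_of_sq_add_sq_eq_one {s c k : ℝ} (hsc : s ^ 2 + c ^ 2 = 1) (hc : c ≠ 0)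
    (h : k / 4 = s * (1 - 4 * c ^ 2) / (4 * c ^ 2)) :
    4 * s ^ 3 + k * s ^ 2 - 3 * s - k = 0 := by
  field_simp at h
  linear_combination -h + (k + 4 * s) * hsc

theorem lion_dance_equilibrium_reduction_general (ω lam w v : ℝ)
    (hcos2w : Real.cos (2 * w) ≠ 0) (hv : 0 < v)
    (heq2 : Real.cos w * Real.sinh v + Real.cos (2 * w) * Real.sinh (2 * v) = 0) :
    Real.cosh v = -Real.cos w / (2 * Real.cos (2 * w)) ∧
      (3 * ω / (2 * lam) =
          Real.sin w * Real.cosh v + Real.sin (2 * w) * Real.cosh (2 * v) →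
        4 * Real.sin (2 * w) ^ 3 + (6 * ω / lam) * Real.sin (2 * w) ^ 2 -
            3 * Real.sin (2 * w) - 6 * ω / lam = 0) := by
  have hcosh := cosh_eq_of_mul_sinh_add_mul_sinh_two_mul_eq_zero hcos2w hv.ne' heq2
  refine ⟨hcosh, fun hfirst => ?_⟩
  apply cubic_of_eq_div_of_sq_add_sq_eq_one (sin_sq_add_cos_sq (2 * w)) hcos2w
  rw [← sin_mul_cosh_add_sin_two_mul_mul_cosh_two_mul_of_cosh_eq hcos2w hcosh, ← hfirst]
  ring

/-- Reduction of the `N = 3` equilibrium equations: if `cos(2w) ≠ 0`, `v > 0` and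
`cos w sinh v + cos 2w sinh 2v = 0`, then `cosh v = -cos w / (2 cos 2w)`, and
substituting into `3ω/(2λ) = sin w cosh v + sin 2w cosh 2v` yields the cubic
`4 s³ + (6ω/λ) s² - 3 s - 6ω/λ = 0` for `s = sin 2w`. -/
theorem lion_dance_equilibrium_reduction (ω lam w v : ℝ)
    (hω : 0 < ω) (hlam : 0 < lam)
    (hcos2w : Real.cos (2 * w) ≠ 0) (hv : 0 < v)
    (heq2 : Real.cos w * Real.sinh v + Real.cos (2 * w) * Real.sinh (2 * v) = 0) :
    Real.cosh v = -Real.cos w / (2 * Real.cos (2 * w)) ∧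
      (3 * ω / (2 * lam) =
          Real.sin w * Real.cosh v + Real.sin (2 * w) * Real.cosh (2 * v) →
        4 * Real.sin (2 * w) ^ 3 + (6 * ω / lam) * Real.sin (2 * w) ^ 2 -
            3 * Real.sin (2 * w) - 6 * ω / lam = 0) :=
  lion_dance_equilibrium_reduction_general ω lam w v hcos2w hv heq2
end
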